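/- arXiv:1811.08010 — 2 statements merged into one kernel-verified Lean document; each statement's English description precedes it below -/
import Mathlib

section
/- Let Y_1, ..., Y_I be a collection of subsets of R^m. Then for every y in the convex hull of the Minkowski sum Y_1 + ... + Y_I, there exists a subset I(y) of {1,...,I} of cardinality at most m such that y belongs to the Minkowski sum of Y_i for i not in I(y), plus the Minkowski sum of conv(Y_i) for i in I(y). -/
/-! Tag each `Y i` as `Y i × {eᵢ}` inside `E × ℝ^ι`. If `y = ∑ zᵢ` with `zᵢ ∈ conv (Y i)`, then
`∑ |ι|⁻¹ • (zᵢ, eᵢ)` lies in the convex hull of the tagged union, so by Carathéodory it is a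
positive combination of affinely independent tagged points. These lie on the hyperplane
`∑ tᵢ = 1`, so there are at most `dim E + |ι|` of them. Reading off the `eᵢ`-coordinate, the
weights of the points tagged `i` sum to `|ι|⁻¹`: every index is used at least once, hence at most
`dim E` indices are used twice or more, and each remaining index contributes a point of `Y i`
itself. -/

open Pointwise Set Finset Module Function

theorem AffineIndependent.card_le_finrank_of_apply_eq {k V κ : Type*} [Field k] [AddCommGroup V]
    [Module k V] [FiniteDimensional k V] [Fintype κ] {p : κ → V} (hp : AffineIndependent k p)
    {f : V →ₗ[k] k} (hf : f ≠ 0) {c : k} (hpf : ∀ j, f (p j) = c) :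
    Fintype.card κ ≤ finrank k V := by
  have hspan : vectorSpan k (range p) ≤ LinearMap.ker f := by
    rw [vectorSpan_def, Submodule.span_le]
    rintro _ ⟨_, ⟨a, rfl⟩, _, ⟨b, rfl⟩, rfl⟩
    simp [hpf]
  have hker : LinearMap.ker f ≠ ⊤ := by simpa [LinearMap.ker_eq_top] using hf
  calc Fintype.card κ ≤ finrank k (vectorSpan k (range p)) + 1 := hp.card_le_finrank_succ
    _ ≤ finrank k (LinearMap.ker f) + 1 := by gcongr; exact Submodule.finrank_mono hspan
    _ ≤ finrank k V := Submodule.finrank_lt hker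

theorem Finset.card_filter_one_lt_card_fiber_add_card_le {ι κ : Type*} [Fintype ι] [Fintype κ]
    [DecidableEq ι] {idx : κ → ι} (hidx : Surjective idx) :
    #{i | 1 < #{k | idx k = i}} + Fintype.card ι ≤ Fintype.card κ := by
  calc #{i | 1 < #{k | idx k = i}} + Fintype.card ι
      = ∑ i, ((if 1 < #{k | idx k = i} then 1 else 0) + 1) := by
        simp [sum_add_distrib, sum_boole]
    _ ≤ ∑ i, #{k | idx k = i} := by
        refine sum_le_sum fun i _ => ?_
        obtain ⟨k, rfl⟩ := hidx i
        have : 0 < #{k' | idx k' = idx k} := card_pos.2 ⟨k, by simp⟩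
        split_ifs <;> omega
    _ = Fintype.card κ := (card_eq_sum_card_fiberwise fun k _ => mem_univ (idx k)).symm

theorem Finset.sum_smul_mem_of_card_le_one {R κ E : Type*} [Semiring R] [Nontrivial R]
    [AddCommMonoid E] [Module R E] {s : Finset κ} {w : κ → R} {x : κ → E} {Y : Set E}
    (hw : ∑ k ∈ s, w k = 1) (hs : #s ≤ 1) (hx : ∀ k ∈ s, x k ∈ Y) : ∑ k ∈ s, w k • x k ∈ Y := by
  have hne : s.Nonempty := nonempty_of_sum_ne_zero (hw ▸ one_ne_zero)
  obtain ⟨k, rfl⟩ := card_eq_one.1 (le_antisymm hs hne.card_pos)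
  rw [sum_singleton] at hw
  simpa [hw] using hx k (mem_singleton_self k)

namespace ShapleyFolkman

universe u v

variable {E : Type u} {ι : Type v} [DecidableEq ι]

def taggedUnion (Y : ι → Set E) : Set (E × (ι → ℝ)) := ⋃ i, Y i ×ˢ {Pi.single i 1}

theorem mem_taggedUnion {Y : ι → Set E} {p : E × (ι → ℝ)} :
    p ∈ taggedUnion Y ↔ ∃ i, p.1 ∈ Y i ∧ p.2 = Pi.single i 1 := by
  simp [taggedUnion]

variable [AddCommGroup E] [Module ℝ E] [Fintype ι]

theorem sum_inv_card_smul_mem_convexHull_taggedUnion [Nonempty ι] {Y : ι → Set E} {z : ι → E}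
    (hz : ∀ i, z i ∈ convexHull ℝ (Y i)) :
    ∑ i, (Fintype.card ι : ℝ)⁻¹ • (z i, (Pi.single i 1 : ι → ℝ)) ∈
      convexHull ℝ (taggedUnion Y) := by
  have hN : ∑ _i : ι, (Fintype.card ι : ℝ)⁻¹ = 1 := by
    rw [sum_const, card_univ, nsmul_eq_mul, mul_inv_cancel₀ (by simp)]
  refine (convex_convexHull ℝ _).sum_mem (fun _ _ => by positivity) hN fun i _ => ?_
  refine convexHull_mono (subset_iUnion (fun i => Y i ×ˢ {(Pi.single i 1 : ι → ℝ)}) i) ?_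
  rw [convexHull_prod, convexHull_singleton]
  exact ⟨hz i, rfl⟩

theorem sum_smul_mem_of_sum_fiber_eq_one {κ : Type*} [Fintype κ] {Y : ι → Set E} {idx : κ → ι}
    {x : κ → E} {w : κ → ℝ} (hx : ∀ k, x k ∈ Y (idx k)) (hw₀ : ∀ k, 0 ≤ w k)
    (hw₁ : ∀ i, ∑ k with idx k = i, w k = 1) {S : Finset ι}
    (hS : ∀ i ∉ S, #{k | idx k = i} ≤ 1) :
    ∑ k, w k • x k ∈ (∑ i ∈ Sᶜ, Y i) + ∑ i ∈ S, convexHull ℝ (Y i) := by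
  rw [← sum_fiberwise univ idx, ← sum_compl_add_sum S]
  refine add_mem_add (finsetSum_mem_finsetSum _ _ _ fun i hi => ?_)
    (finsetSum_mem_finsetSum _ _ _ fun i _ => ?_)
  · exact sum_smul_mem_of_card_le_one (hw₁ i) (hS i (mem_compl.1 hi))
      fun k hk => (mem_filter.1 hk).2 ▸ hx k
  · exact (convex_convexHull ℝ _).sum_mem (fun k _ => hw₀ k) (hw₁ i)
      fun k hk => subset_convexHull ℝ _ ((mem_filter.1 hk).2 ▸ hx k)

theorem exists_fiberwise_convex_combination [FiniteDimensional ℝ E] [Nonempty ι]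
    {Y : ι → Set E} {z : ι → E} (hz : ∀ i, z i ∈ convexHull ℝ (Y i)) :
    ∃ (κ : Type max u v) (_ : Fintype κ) (idx : κ → ι) (x : κ → E) (w : κ → ℝ),
      (∀ k, x k ∈ Y (idx k)) ∧ (∀ k, 0 < w k) ∧ (∀ i, ∑ k with idx k = i, w k = 1) ∧
      ∑ k, w k • x k = ∑ i, z i ∧ Fintype.card κ ≤ finrank ℝ E + Fintype.card ι := by
  have hP := sum_inv_card_smul_mem_convexHull_taggedUnion hz
  obtain ⟨κ, _, q, w, hqY, hq, hw, -, hwq⟩ := eq_pos_convex_span_of_mem_convexHull hP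
  choose idx hx hqx using fun k => mem_taggedUnion.1 (hqY (mem_range_self k))
  set N : ℝ := (Fintype.card ι : ℝ)
  have hN : N ≠ 0 := by simp [N]
  have hfst : ∑ k, w k • (q k).1 = N⁻¹ • ∑ i, z i := by
    simpa [Prod.fst_sum, smul_sum] using congrArg Prod.fst hwq
  have hsnd (i : ι) : ∑ k with idx k = i, w k = N⁻¹ := by
    rw [sum_filter]
    simpa [Prod.snd_sum, hqx, Pi.single_apply, eq_comm] using congrFun (congrArg Prod.snd hwq) i
  let f : E × (ι → ℝ) →ₗ[ℝ] ℝ := (∑ i, LinearMap.proj i) ∘ₗ LinearMap.snd ℝ E (ι → ℝ)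
  have hf : f ≠ 0 := by
    obtain ⟨i⟩ := ‹Nonempty ι›
    intro h
    simpa [f] using LinearMap.congr_fun h (0, Pi.single i 1)
  have hcard := hq.card_le_finrank_of_apply_eq hf (c := 1) fun k => by simp [f, hqx]
  refine ⟨κ, ‹_›, idx, fun k => (q k).1, fun k => N * w k, hx,
    fun k => mul_pos (by positivity) (hw k), fun i => by rw [← mul_sum, hsnd, mul_inv_cancel₀ hN],
    ?_, ?_⟩
  · simp_rw [mul_smul]
    rw [← smul_sum, hfst, smul_inv_smul₀ hN]
  · simpa using hcard

end ShapleyFolkman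

open ShapleyFolkman in
theorem exists_card_le_finrank_mem_sum_add_sum_convexHull {E ι : Type*} [AddCommGroup E]
    [Module ℝ E] [FiniteDimensional ℝ E] [Fintype ι] [DecidableEq ι] (Y : ι → Set E) {y : E}
    (hy : y ∈ convexHull ℝ (∑ i, Y i)) :
    ∃ S : Finset ι, #S ≤ finrank ℝ E ∧ y ∈ (∑ i ∈ Sᶜ, Y i) + ∑ i ∈ S, convexHull ℝ (Y i) := by
  rcases isEmpty_or_nonempty ι with _ | _
  · exact ⟨∅, by simp, by simpa using hy⟩
  rw [convexHull_sum, mem_fintype_sum] at hy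
  obtain ⟨z, hz, rfl⟩ := hy
  obtain ⟨κ, _, idx, x, w, hx, hw, hw₁, hwx, hcard⟩ := exists_fiberwise_convex_combination hz
  have hidx : Surjective idx := fun i => by
    obtain ⟨k, hk⟩ := nonempty_of_sum_ne_zero ((hw₁ i).symm ▸ one_ne_zero)
    exact ⟨k, (mem_filter.1 hk).2⟩
  refine ⟨({i | 1 < #{k | idx k = i}} : Finset ι), ?_, hwx ▸ sum_smul_mem_of_sum_fiber_eq_one hx
    (fun k => (hw k).le) hw₁ fun i hi => by simpa using hi⟩
  have := card_filter_one_lt_card_fiber_add_card_le hidx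
  omega

/-- **Shapley-Folkman lemma.** For subsets `Y 1, ..., Y I` of `ℝ^m` and any point `y` in the
convex hull of the Minkowski sum `Y 1 + ... + Y I`, there is a subset `S ⊆ {1,...,I}` of
cardinality at most `m` such that `y` lies in the Minkowski sum of the `Y i` for `i ∉ S` plus
the Minkowski sum of the convex hulls `conv (Y i)` for `i ∈ S`. -/
theorem shapley_folkman (m I : ℕ) (Y : Fin I → Set (Fin m → ℝ))
    (y : Fin m → ℝ) (hy : y ∈ convexHull ℝ (∑ i, Y i)) :
    ∃ S : Finset (Fin I), S.card ≤ m ∧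
      y ∈ (∑ i ∈ Sᶜ, Y i) + ∑ i ∈ S, convexHull ℝ (Y i) := by
  simpa using exists_card_le_finrank_mem_sum_add_sum_convexHull Y hy
end

section
/- Let h_1, ..., h_I : R^t → R be continuous functions, each with compact convex effective domain. Define p(0) = inf{Σ_{i=1}^I h_i(u_i) : Σ_{i=1}^I u_i = 0, u_i ∈ dom h_i} and let cl h_i denote the convex closure of h_i, with Δ_i := sup_u (h_i(u) − cl h_i(u)) and Δ := max_i Δ_i. Let (clp)(0) := inf{Σ_{i=1}^I cl h_i(u_i) : Σ u_i = 0} denote the corresponding convexified value (equivalently inf{w : (0,w) ∈ conv(Y_1+...+Y_I)} with Y_i the graph-epigraph set of h_i). Then p(0) − (clp)(0) ≤ (t+1)·Δ. -/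
/-!
Write `Y i` for the graph of `h i` over `D i` in `ℝ^t × ℝ`. If `u` is feasible for the convexified
problem and `s i` is a value of a convex combination realising `u i` in the definition of
`cl h_i (u i)`, then `x i = (u i, s i) ∈ conv (Y i)`. By the Shapley–Folkman lemma `∑ x i` is also
a sum of points `y i ∈ conv (Y i)` of which all but `t + 1` lie in `Y i` itself. The first
coordinates of the `y i` are feasible for the original problem; a summand with `y i ∈ Y i` costs
nothing extra, and each of the at most `t + 1` others costs at most `Δ`.

The Shapley–Folkman lemma itself is conic Carathéodory in `E × ℝ^ι`: tag every point of a convex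
representation of `x i` with the basis vector `e_i`. A nonnegative combination can be reduced to
one supported on linearly independent vectors, so on at most `dim E + |ι|` points, while every
summand still needs at least one point.
-/

/-- Convex closure of `h` on the domain `D`, via Carathéodory combinations of `t+2` points. -/
noncomputable def clCara (t : ℕ) (D : Set (Fin t → ℝ)) (h : (Fin t → ℝ) → ℝ)
    (v : Fin t → ℝ) : ℝ :=
  sInf {s | ∃ (a : Fin (t + 2) → ℝ) (u : Fin (t + 2) → Fin t → ℝ),
    (∀ j, 0 ≤ a j) ∧ ∑ j, a j = 1 ∧ (∀ j, u j ∈ D) ∧ v = ∑ j, a j • u j ∧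
    s = ∑ j, a j * h (u j)}

open Module Finset Function

lemma exists_sum_smul_eq_zero_of_not_linearIndepOn {R M κ : Type*} [Ring R] [AddCommGroup M]
    [Module R M] [Fintype κ] {f : κ → M} {s : Set κ} (hs : ¬LinearIndepOn R f s) :
    ∃ b : κ → R, support b ⊆ s ∧ ∑ k, b k • f k = 0 ∧ b ≠ 0 := by
  obtain ⟨l, hls, hl0, hl⟩ := linearDepOn_iff'.mp hs
  refine ⟨l, ?_, ?_, Finsupp.coe_eq_zero.not.2 hl⟩
  · rw [Finsupp.fun_support_eq]
    exact (Finsupp.mem_supported R l).1 hls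
  · rwa [Finsupp.linearCombination_apply,
      Finsupp.sum_fintype l (fun i a => a • f i) fun _ => zero_smul R _] at hl0

lemma exists_card_add_card_le_of_forall_exists_mem {ι : Type*} {α : ι → Type*} [Fintype ι]
    (S : Finset (Σ i, α i)) (hS : ∀ i, ∃ a, ⟨i, a⟩ ∈ S) :
    ∃ B : Finset ι, Fintype.card ι + #B ≤ #S ∧ ∀ i ∉ B, ∃ a, ∀ a', ⟨i, a'⟩ ∈ S → a' = a := by
  classical
  let fiber i := S.filter (·.1 = i)
  have hfiber : ∀ i, 1 ≤ #(fiber i) := fun i => by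
    obtain ⟨a, ha⟩ := hS i
    exact card_pos.2 ⟨⟨i, a⟩, mem_filter.2 ⟨ha, rfl⟩⟩
  refine ⟨({i | 2 ≤ #(fiber i)} : Finset ι), ?_, fun i hi => ?_⟩
  · calc Fintype.card ι + #{i | 2 ≤ #(fiber i)}
        = ∑ i, (1 + if 2 ≤ #(fiber i) then 1 else 0) := by
          rw [sum_add_distrib, ← card_filter]
          simp
      _ ≤ ∑ i, #(fiber i) := sum_le_sum fun i _ => by have := hfiber i; split_ifs <;> omega
      _ = #S := (card_eq_sum_card_fiberwise fun k _ => mem_univ k.1).symm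
  · have hle : #(fiber i) ≤ 1 := by
      simp only [mem_filter, mem_univ, true_and, not_le] at hi
      omega
    obtain ⟨a, ha⟩ := hS i
    exact ⟨a, fun a' ha' => sigma_mk_injective
      (card_le_one.1 hle _ (mem_filter.2 ⟨ha', rfl⟩) _ (mem_filter.2 ⟨ha, rfl⟩))⟩

section OrderedField

variable {𝕜 E κ ι : Type*} [Field 𝕜] [LinearOrder 𝕜] [IsStrictOrderedRing 𝕜]
  [AddCommGroup E] [Module 𝕜 E]

lemma exists_nonneg_add_smul_support_ssubset [Fintype κ] {c b : κ → 𝕜} (hc : 0 ≤ c)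
    (hb : support b ⊆ support c) (hneg : ∃ k, b k < 0) :
    ∃ τ : 𝕜, 0 ≤ c + τ • b ∧ support (c + τ • b) ⊂ support c := by
  obtain ⟨k₀, hk₀, hmin⟩ := exists_min_image {k | b k < 0} (fun k => c k / -b k)
    (by simpa [Finset.Nonempty] using hneg)
  simp only [mem_filter, mem_univ, true_and] at hk₀ hmin
  set τ := c k₀ / -b k₀
  have hτ : 0 ≤ τ := div_nonneg (hc k₀) (neg_nonneg.2 hk₀.le)
  refine ⟨τ, fun k => ?_, ?_⟩
  · simp only [Pi.zero_apply, Pi.add_apply, Pi.smul_apply, smul_eq_mul]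
    rcases lt_or_ge (b k) 0 with hbk | hbk
    · have := (le_div_iff₀ (neg_pos.2 hbk)).1 (hmin k hbk)
      linarith
    · exact add_nonneg (hc k) (mul_nonneg hτ hbk)
  · have hsub : support (c + τ • b) ⊆ support c :=
      (support_add _ _).trans (Set.union_subset le_rfl ((support_smul_subset_right _ _).trans hb))
    refine (Set.ssubset_iff_of_subset hsub).2 ⟨k₀, hb hk₀.ne, ?_⟩
    simp only [mem_support, Pi.add_apply, Pi.smul_apply, smul_eq_mul, not_not, τ]
    field_simp [hk₀.ne]
    ring

theorem exists_nonneg_sum_smul_eq_linearIndepOn [Fintype κ] (f : κ → E) {c : κ → 𝕜}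
    (hc : 0 ≤ c) :
    ∃ c' : κ → 𝕜, 0 ≤ c' ∧ ∑ k, c' k • f k = ∑ k, c k • f k ∧
      LinearIndepOn 𝕜 f (support c') := by
  induction hn : (support c).ncard using Nat.strong_induction_on generalizing c with
  | _ n ih =>
  by_cases hli : LinearIndepOn 𝕜 f (support c)
  · exact ⟨c, hc, rfl, hli⟩
  obtain ⟨b, hbc, hbf, k, hk⟩ :
      ∃ b : κ → 𝕜, support b ⊆ support c ∧ ∑ k, b k • f k = 0 ∧ ∃ k, b k < 0 := by
    obtain ⟨b, hbc, hbf, hb0⟩ := exists_sum_smul_eq_zero_of_not_linearIndepOn hli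
    obtain ⟨k, hk⟩ := Function.ne_iff.mp hb0
    rcases hk.lt_or_gt with hk | hk
    · exact ⟨b, hbc, hbf, k, hk⟩
    · exact ⟨-b, by rwa [support_neg], by simp [neg_smul, hbf], k, by simpa using hk⟩
  obtain ⟨τ, hτc, hτs⟩ := exists_nonneg_add_smul_support_ssubset hc hbc ⟨k, hk⟩
  obtain ⟨c', hc', hsum, hli'⟩ := ih _ (hn ▸ Set.ncard_lt_ncard hτs) hτc rfl
  refine ⟨c', hc', hsum.trans ?_, hli'⟩
  simp [add_smul, sum_add_distrib, mul_smul, ← smul_sum, hbf]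

theorem shapley_folkman_s7 [Fintype ι] [FiniteDimensional 𝕜 E] (Y : ι → Set E) {x : ι → E}
    (hx : ∀ i, x i ∈ convexHull 𝕜 (Y i)) :
    ∃ y : ι → E, (∀ i, y i ∈ convexHull 𝕜 (Y i)) ∧ ∑ i, y i = ∑ i, x i ∧
      ∃ B : Finset ι, #B ≤ finrank 𝕜 E ∧ ∀ i ∉ B, y i ∈ Y i := by
  classical
  choose α _ w z hw0 hw1 hzY hwx using fun i => mem_convexHull_iff_exists_fintype.1 (hx i)
  let f : (Σ i, α i) → E × (ι → 𝕜) := fun k => (z k.1 k.2, Pi.single k.1 1)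
  have hf : ∀ c : (Σ i, α i) → 𝕜,
      ∑ k, c k • f k = (∑ i, ∑ a, c ⟨i, a⟩ • z i a, fun i => ∑ a, c ⟨i, a⟩) := by
    intro c
    ext <;> simp [f, Fintype.sum_sigma, Prod.fst_sum, Prod.snd_sum, Pi.single_apply]
  obtain ⟨c, hc0, hcf, hli⟩ :=
    exists_nonneg_sum_smul_eq_linearIndepOn f (c := fun k => w k.1 k.2) fun k => hw0 k.1 k.2
  simp only [hf, Prod.mk.injEq, funext_iff, hw1, hwx] at hcf
  obtain ⟨hsum, hc1⟩ := hcf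
  have hcard : #{k | c k ≠ 0} ≤ finrank 𝕜 E + Fintype.card ι := by
    have := hli.fintype_card_le_finrank
    rwa [← Set.toFinset_card, Function.support, Set.toFinset_ofPred, finrank_prod,
      finrank_fintype_fun_eq_card] at this
  obtain ⟨B, hB, hBsingle⟩ := exists_card_add_card_le_of_forall_exists_mem {k | c k ≠ 0}
    fun i => by simpa using exists_ne_zero_of_sum_ne_zero ((hc1 i).trans_ne one_ne_zero)
  refine ⟨fun i => ∑ a, c ⟨i, a⟩ • z i a,
    fun i => mem_convexHull_of_exists_fintype _ _ (fun a => hc0 _) (hc1 i) (hzY i) rfl, hsum,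
    B, by omega, fun i hi => ?_⟩
  obtain ⟨a, ha⟩ := hBsingle i hi
  have hother : ∀ a' ≠ a, c ⟨i, a'⟩ = 0 := fun a' h' => by
    by_contra hne
    exact h' (ha a' (by simpa using hne))
  have hca : c ⟨i, a⟩ = 1 := by rw [← hc1 i, Fintype.sum_eq_single a hother]
  have hy : ∑ a', c ⟨i, a'⟩ • z i a' = z i a := by
    rw [Fintype.sum_eq_single (f := fun a' => c ⟨i, a'⟩ • z i a') a
      fun a' h' => by rw [hother a' h', zero_smul], hca, one_smul]
  simpa only [hy] using hzY i a

theorem exists_fin_convexCombination_of_mem_convexHull [FiniteDimensional 𝕜 E] {s : Set E}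
    {x : E} (hx : x ∈ convexHull 𝕜 s) {n : ℕ} (hn : finrank 𝕜 E + 1 ≤ n) :
    ∃ (w : Fin n → 𝕜) (z : Fin n → E), (∀ j, 0 ≤ w j) ∧ ∑ j, w j = 1 ∧ (∀ j, z j ∈ s) ∧
      ∑ j, w j • z j = x := by
  obtain ⟨ι, _, z, w, hzs, hz, hw0, hw1, hwx⟩ := eq_pos_convex_span_of_mem_convexHull hx
  obtain ⟨e⟩ : Nonempty (ι ↪ Fin n) := Function.Embedding.nonempty_of_card_le <| by
    have := hz.card_le_finrank_succ
    have := Submodule.finrank_le (vectorSpan 𝕜 (Set.range z))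
    simp only [Fintype.card_fin]
    omega
  obtain ⟨z₀, hz₀⟩ := convexHull_nonempty_iff.1 ⟨x, hx⟩
  refine ⟨extend e w 0, extend e z fun _ => z₀, fun j => ?_, ?_, fun j => ?_, ?_⟩
  · by_cases hj : ∃ a, e a = j
    · obtain ⟨a, rfl⟩ := hj
      exact e.injective.extend_apply w 0 a ▸ (hw0 a).le
    · rw [extend_apply' _ _ _ hj]
      rfl
  · rw [← hw1]
    exact (Fintype.sum_of_injective e e.injective w (extend e w 0)
      (fun j hj => extend_apply' _ _ _ hj) fun a => (e.injective.extend_apply _ _ a).symm).symm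
  · by_cases hj : ∃ a, e a = j
    · obtain ⟨a, rfl⟩ := hj
      exact e.injective.extend_apply z _ a ▸ hzs ⟨a, rfl⟩
    · rw [extend_apply' _ _ _ hj]
      exact hz₀
  · rw [← hwx]
    refine (Fintype.sum_of_injective e e.injective (fun a => w a • z a)
      (fun j => extend e w 0 j • extend e z (fun _ => z₀) j)
      (fun j hj => by rw [extend_apply' _ _ _ hj, Pi.zero_apply, zero_smul])
      fun a => by rw [e.injective.extend_apply, e.injective.extend_apply]).symm

end OrderedField

section ConvexEnvelope

variable {E ι : Type*} [AddCommGroup E] [Module ℝ E]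

-- The paper's `cl h` for `h` with effective domain `D`; it is junk (`sInf` of an unbounded or
-- empty set) unless `h` is bounded below on `D` and `v ∈ convexHull ℝ D`.
noncomputable def convexEnvelope (D : Set E) (h : E → ℝ) (v : E) : ℝ :=
  sInf {s | (v, s) ∈ convexHull ℝ (D.graphOn h)}

variable {D : Set E} {h : E → ℝ}

lemma fst_mem_of_mem_convexHull_graphOn (hD : Convex ℝ D) {x : E × ℝ}
    (hx : x ∈ convexHull ℝ (D.graphOn h)) : x.1 ∈ D :=
  (convexHull_min (t := D ×ˢ Set.univ) (by rintro _ ⟨u, hu, rfl⟩; exact Set.mk_mem_prod hu trivial)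
    (hD.prod convex_univ) hx).1

lemma le_snd_of_mem_convexHull_graphOn {m : ℝ} (hm : ∀ u ∈ D, m ≤ h u) {x : E × ℝ}
    (hx : x ∈ convexHull ℝ (D.graphOn h)) : m ≤ x.2 :=
  (convexHull_min (t := Set.univ ×ˢ Set.Ici m)
    (by rintro _ ⟨u, hu, rfl⟩; exact Set.mk_mem_prod trivial (hm u hu))
    (convex_univ.prod (convex_Ici m)) hx).2

lemma convexEnvelope_le (hh : BddBelow (h '' D)) {x : E × ℝ}
    (hx : x ∈ convexHull ℝ (D.graphOn h)) : convexEnvelope D h x.1 ≤ x.2 := by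
  obtain ⟨m, hm⟩ := hh
  exact csInf_le ⟨m, fun s hs => le_snd_of_mem_convexHull_graphOn
    (fun u hu => hm ⟨u, hu, rfl⟩) hs⟩ hx

lemma convexEnvelope_le_self (hh : BddBelow (h '' D)) {v : E} (hv : v ∈ D) :
    convexEnvelope D h v ≤ h v :=
  convexEnvelope_le hh (x := (v, h v)) (subset_convexHull ℝ _ ⟨v, hv, rfl⟩)

lemma le_convexEnvelope {m : ℝ} (hm : ∀ u ∈ D, m ≤ h u) {v : E} (hv : v ∈ D) :
    m ≤ convexEnvelope D h v :=
  le_csInf ⟨h v, subset_convexHull ℝ _ ⟨v, hv, rfl⟩⟩ fun _ hs =>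
    le_snd_of_mem_convexHull_graphOn hm hs

theorem exists_sum_le_sum_add_of_mem_convexHull_graphOn [Fintype ι] [FiniteDimensional ℝ E]
    {D : ι → Set E} (hD : ∀ i, Convex ℝ (D i)) {h : ι → E → ℝ}
    (hh : ∀ i, BddBelow (h i '' D i)) {Δ : ℝ} (hΔ0 : 0 ≤ Δ)
    (hΔ : ∀ i, ∀ u ∈ D i, h i u ≤ convexEnvelope (D i) (h i) u + Δ)
    {x : ι → E × ℝ} (hx : ∀ i, x i ∈ convexHull ℝ ((D i).graphOn (h i))) :
    ∃ u : ι → E, (∀ i, u i ∈ D i) ∧ ∑ i, u i = ∑ i, (x i).1 ∧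
      ∑ i, h i (u i) ≤ ∑ i, (x i).2 + (finrank ℝ E + 1) * Δ := by
  classical
  obtain ⟨y, hy, hyx, B, hB, hyB⟩ := shapley_folkman_s7 (fun i => (D i).graphOn (h i)) hx
  have hyD : ∀ i, (y i).1 ∈ D i := fun i => fst_mem_of_mem_convexHull_graphOn (hD i) (hy i)
  have hle : ∀ i, h i (y i).1 ≤ (y i).2 + if i ∈ B then Δ else 0 := by
    intro i
    split_ifs with hi
    · linarith [hΔ i _ (hyD i), convexEnvelope_le (hh i) (hy i)]
    · rw [add_zero, (Set.mem_graphOn.1 (hyB i hi)).2]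
  have hB' : (#B : ℝ) ≤ finrank ℝ E + 1 := by
    rw [finrank_prod, finrank_self] at hB
    exact_mod_cast hB
  refine ⟨fun i => (y i).1, hyD, by simpa [Prod.fst_sum] using congrArg Prod.fst hyx, ?_⟩
  calc ∑ i, h i (y i).1 ≤ ∑ i, ((y i).2 + if i ∈ B then Δ else 0) := sum_le_sum fun i _ => hle i
    _ = ∑ i, (x i).2 + #B * Δ := by
      rw [sum_add_distrib, ← Prod.snd_sum, hyx, Prod.snd_sum, sum_ite_mem, univ_inter,
        sum_const, nsmul_eq_mul]
    _ ≤ ∑ i, (x i).2 + (finrank ℝ E + 1) * Δ := by gcongr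

lemma le_sum_sInf_of_forall_le_sum [Fintype ι] {S : ι → Set ℝ} (hS : ∀ i, (S i).Nonempty)
    {a : ℝ} (h : ∀ s : ι → ℝ, (∀ i, s i ∈ S i) → a ≤ ∑ i, s i) : a ≤ ∑ i, sInf (S i) := by
  refine le_of_forall_pos_lt_add fun ε hε => ?_
  set n : ℝ := (Fintype.card ι : ℝ)
  have hε' : 0 < ε / (n + 1) := by positivity
  choose s hs hlt using fun i => Real.lt_sInf_add_pos (hS i) hε'
  have hnε : n * (ε / (n + 1)) < ε := by
    rw [← mul_div_assoc, div_lt_iff₀ (by positivity)]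
    linarith
  calc a ≤ ∑ i, s i := h s hs
    _ ≤ ∑ i, (sInf (S i) + ε / (n + 1)) := sum_le_sum fun i _ => (hlt i).le
    _ = ∑ i, sInf (S i) + n * (ε / (n + 1)) := by simp [sum_add_distrib, n]
    _ < ∑ i, sInf (S i) + ε := by linarith

theorem sInf_sum_le_sInf_sum_convexEnvelope_add [Fintype ι] [FiniteDimensional ℝ E]
    {D : ι → Set E} (hD : ∀ i, Convex ℝ (D i)) {h : ι → E → ℝ}
    (hh : ∀ i, BddBelow (h i '' D i)) {Δ : ℝ} (hΔ0 : 0 ≤ Δ)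
    (hΔ : ∀ i, ∀ u ∈ D i, h i u ≤ convexEnvelope (D i) (h i) u + Δ) (v : E) :
    sInf {s | ∃ u : ι → E, (∀ i, u i ∈ D i) ∧ ∑ i, u i = v ∧ s = ∑ i, h i (u i)} ≤
      sInf {s | ∃ u : ι → E, (∀ i, u i ∈ D i) ∧ ∑ i, u i = v ∧
        s = ∑ i, convexEnvelope (D i) (h i) (u i)} + (finrank ℝ E + 1) * Δ := by
  set P := {s | ∃ u : ι → E, (∀ i, u i ∈ D i) ∧ ∑ i, u i = v ∧ s = ∑ i, h i (u i)}
  set Q := {s | ∃ u : ι → E, (∀ i, u i ∈ D i) ∧ ∑ i, u i = v ∧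
    s = ∑ i, convexEnvelope (D i) (h i) (u i)}
  have hPbdd : BddBelow P := by
    choose m hm using hh
    exact ⟨∑ i, m i, by
      rintro _ ⟨u, hu, -, rfl⟩
      exact sum_le_sum fun i _ => hm i ⟨u i, hu i, rfl⟩⟩
  rcases Q.eq_empty_or_nonempty with hQ | hQ
  · have hP : P = ∅ := Set.eq_empty_of_forall_notMem fun _ ⟨u, hu, hv, _⟩ =>
      hQ.subset ⟨u, hu, hv, rfl⟩
    rw [hP, hQ, Real.sInf_empty, zero_add]
    positivity
  rw [← sub_le_iff_le_add]
  refine le_csInf hQ ?_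
  rintro _ ⟨u, hu, rfl, rfl⟩
  refine le_sum_sInf_of_forall_le_sum
    (S := fun i => {r | (u i, r) ∈ convexHull ℝ ((D i).graphOn (h i))})
    (fun i => ⟨h i (u i), subset_convexHull ℝ _ ⟨u i, hu i, rfl⟩⟩) fun s hs => ?_
  obtain ⟨u', hu', hsum, hle⟩ :=
    exists_sum_le_sum_add_of_mem_convexHull_graphOn hD hh hΔ0 hΔ (x := fun i => (u i, s i)) hs
  rw [sub_le_iff_le_add]
  exact (csInf_le hPbdd ⟨u', hu', hsum, rfl⟩).trans hle

end ConvexEnvelope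

theorem clCara_eq_convexEnvelope (t : ℕ) (D : Set (Fin t → ℝ)) (h : (Fin t → ℝ) → ℝ)
    (v : Fin t → ℝ) : clCara t D h v = convexEnvelope D h v := by
  have hsum (a : Fin (t + 2) → ℝ) (u : Fin (t + 2) → Fin t → ℝ) :
      ∑ j, a j • (u j, h (u j)) = (∑ j, a j • u j, ∑ j, a j * h (u j)) := by
    ext <;> simp [Prod.fst_sum, Prod.snd_sum]
  refine congrArg sInf (Set.ext fun s => ⟨?_, fun hs => ?_⟩)
  · rintro ⟨a, u, ha0, ha1, huD, rfl, rfl⟩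
    exact mem_convexHull_of_exists_fintype a _ ha0 ha1 (fun j => ⟨u j, huD j, rfl⟩) (hsum a u)
  · obtain ⟨a, z, ha0, ha1, hzD, hz⟩ :=
      exists_fin_convexCombination_of_mem_convexHull hs (n := t + 2) (by simp)
    choose u huD hu using hzD
    simp only [← hu, hsum, Prod.mk.injEq] at hz
    exact ⟨a, u, ha0, ha1, huD, hz.1.symm, hz.2.symm⟩

theorem gap_p_clp_le_general (t I : ℕ)
    (D : Fin I → Set (Fin t → ℝ)) (h : Fin I → (Fin t → ℝ) → ℝ)
    (hDc : ∀ i, IsCompact (D i)) (hDconv : ∀ i, Convex ℝ (D i))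
    (hcont : ∀ i, ContinuousOn (h i) (D i))
    (p0 clp0 Δ : ℝ)
    (hp0 : p0 = sInf {s | ∃ u : Fin I → Fin t → ℝ,
      (∀ i, u i ∈ D i) ∧ ∑ i, u i = 0 ∧ s = ∑ i, h i (u i)})
    (hclp0 : clp0 = sInf {s | ∃ u : Fin I → Fin t → ℝ,
      (∀ i, u i ∈ convexHull ℝ (D i)) ∧ ∑ i, u i = 0 ∧
        s = ∑ i, clCara t (D i) (h i) (u i)})
    (hΔ : Δ = ⨆ i : Fin I, sSup {d | ∃ u ∈ D i, d = h i u - clCara t (D i) (h i) u}) :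
    p0 - clp0 ≤ (t + 1 : ℝ) * Δ := by
  have hconv : ∀ i, convexHull ℝ (D i) = D i := fun i => (hDconv i).convexHull_eq
  simp only [clCara_eq_convexEnvelope, hconv] at hclp0 hΔ
  choose C hC using fun i => (hDc i).exists_bound_of_continuousOn (hcont i)
  simp only [Real.norm_eq_abs, abs_le] at hC
  have hh : ∀ i, BddBelow (h i '' D i) := fun i => ⟨-C i, by
    rintro _ ⟨u, hu, rfl⟩
    exact (hC i u hu).1⟩
  have hgap_bdd : ∀ i, BddAbove {d | ∃ u ∈ D i, d = h i u - convexEnvelope (D i) (h i) u} :=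
    fun i => ⟨C i + C i, by
      rintro _ ⟨u, hu, rfl⟩
      linarith [le_convexEnvelope (fun u hu => (hC i u hu).1) hu, (hC i u hu).2]⟩
  have hΔle : ∀ i, ∀ u ∈ D i, h i u ≤ convexEnvelope (D i) (h i) u + Δ := fun i u hu => by
    have := (le_csSup (hgap_bdd i) ⟨u, hu, rfl⟩).trans
      (hΔ ▸ le_ciSup (Set.finite_range _).bddAbove i)
    linarith
  have hΔ0 : 0 ≤ Δ := hΔ ▸ Real.iSup_nonneg fun i => Real.sSup_nonneg <| by
    rintro _ ⟨u, hu, rfl⟩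
    exact sub_nonneg.2 (convexEnvelope_le_self (hh i) hu)
  have key := sInf_sum_le_sInf_sum_convexEnvelope_add hDconv hh hΔ0 hΔle 0
  rw [finrank_fin_fun] at key
  rw [hp0, hclp0]
  linarith

/-- Let `h_1, ..., h_I : ℝ^t → ℝ` be continuous on compact convex domains `D i`. With
`p(0) = inf {Σ_i h_i(u_i) : Σ_i u_i = 0, u_i ∈ D i}`, the convexified value
`(cl p)(0) = inf {Σ_i cl h_i(u_i) : Σ_i u_i = 0, u_i ∈ conv (D i)}`, and
`Δ = max_i sup_{u ∈ D i} (h_i(u) − cl h_i(u))`, we have `p(0) − (cl p)(0) ≤ (t+1)·Δ`. -/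
theorem gap_p_clp_le (t I : ℕ) (hI : 0 < I)
    (D : Fin I → Set (Fin t → ℝ)) (h : Fin I → (Fin t → ℝ) → ℝ)
    (hDc : ∀ i, IsCompact (D i)) (hDconv : ∀ i, Convex ℝ (D i))
    (hcont : ∀ i, ContinuousOn (h i) (D i))
    (p0 clp0 Δ : ℝ)
    (hp0 : p0 = sInf {s | ∃ u : Fin I → Fin t → ℝ,
      (∀ i, u i ∈ D i) ∧ ∑ i, u i = 0 ∧ s = ∑ i, h i (u i)})
    (hclp0 : clp0 = sInf {s | ∃ u : Fin I → Fin t → ℝ,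
      (∀ i, u i ∈ convexHull ℝ (D i)) ∧ ∑ i, u i = 0 ∧
        s = ∑ i, clCara t (D i) (h i) (u i)})
    (hΔ : Δ = ⨆ i : Fin I, sSup {d | ∃ u ∈ D i, d = h i u - clCara t (D i) (h i) u}) :
    p0 - clp0 ≤ (t + 1 : ℝ) * Δ :=
  gap_p_clp_le_general t I D h hDc hDconv hcont p0 clp0 Δ hp0 hclp0 hΔ
end
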